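/- Let H be an RKHS on a compact metric space X that is universal, i.e., for every ε > 0 and every continuous f : X → ℝ there exists g ∈ H with ‖f − g‖_∞ < ε. If the mean embeddings of Borel probability measures p and q in H are equal (μ_p = μ_q), then p = q. -/
import Mathlib

open MeasureTheory

theorem universal_rkhs_mean_embedding_injective
    {X : Type*} [MetricSpace X] [CompactSpace X] [MeasurableSpace X] [BorelSpace X]
    (p q : Measure X) [IsProbabilityMeasure p] [IsProbabilityMeasure q]
    (H : Set C(X, ℝ))
    (huniv : ∀ ε > (0 : ℝ), ∀ f : C(X, ℝ), ∃ g ∈ H, ∀ x, |f x - g x| < ε)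
    (hembed : ∀ g ∈ H, ∫ x, g x ∂p = ∫ z, g z ∂q) :
    p = q := by
  have key : ∀ f : C(X, ℝ), ∫ x, f x ∂p = ∫ x, f x ∂q := by
    intro f
    have habs : |∫ x, f x ∂p - ∫ x, f x ∂q| ≤ 0 := by
      refine le_of_forall_pos_le_add ?_
      intro ε hε
      obtain ⟨g, hgH, hg⟩ := huniv (ε/2) (by linarith) f
      have bound : ∀ (μ : Measure X) [IsProbabilityMeasure μ],
          |∫ x, f x ∂μ - ∫ x, g x ∂μ| ≤ ε/2 := by
        intro μ _
        have hif : Integrable (fun x => f x) μ :=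
          f.continuous.integrable_of_hasCompactSupport
            (HasCompactSupport.of_compactSpace _)
        have hig : Integrable (fun x => g x) μ :=
          g.continuous.integrable_of_hasCompactSupport
            (HasCompactSupport.of_compactSpace _)
        rw [← integral_sub hif hig]
        rw [← Real.norm_eq_abs]
        calc ‖∫ x, (f x - g x) ∂μ‖ ≤ (ε/2) * (μ Set.univ).toReal := by
              apply norm_integral_le_of_norm_le_const
              filter_upwards with x
              exact (le_of_lt (by simpa using hg x))
          _ = ε/2 := by simp
      have h1 := bound p
      have h2 := bound q
      have hgg := hembed g hgH
      calc |∫ x, f x ∂p - ∫ x, f x ∂q|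
          = |(∫ x, f x ∂p - ∫ x, g x ∂p) + ((∫ z, g z ∂q - ∫ x, f x ∂q))| := by
            rw [hgg]; ring_nf
        _ ≤ |∫ x, f x ∂p - ∫ x, g x ∂p| + |∫ z, g z ∂q - ∫ x, f x ∂q| := abs_add_le _ _
        _ ≤ ε/2 + ε/2 := by
            refine add_le_add h1 ?_
            rw [abs_sub_comm]
            exact bound q
        _ = 0 + ε := by ring
    have := abs_nonneg (∫ x, f x ∂p - ∫ x, f x ∂q)
    have : |∫ x, f x ∂p - ∫ x, f x ∂q| = 0 := le_antisymm habs this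
    linarith [abs_eq_zero.mp this, sub_eq_zero.mp (abs_eq_zero.mp this)]
  apply ext_of_forall_lintegral_eq_of_IsFiniteMeasure
  intro f
  have hint : ∀ (μ : Measure X) [IsProbabilityMeasure μ],
      Integrable (fun x => ((f x : ℝ))) μ := by
    intro μ _
    exact (f.continuous.subtype_val.integrable_of_hasCompactSupport
      (HasCompactSupport.of_compactSpace _))
  rw [lintegral_coe_eq_integral _ (hint p), lintegral_coe_eq_integral _ (hint q)]
  exact congrArg ENNReal.ofReal (key ⟨fun x => (f x : ℝ), f.continuous.subtype_val⟩)
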